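/- Let η be a real random variable with finite Grand Lebesgue norm K = sup_{p ∈ (1,b)} |η|_p/ψ(p) ∈ (0,∞) for a strictly positive function ψ on (1,b). Define h(p) = p·ln ψ(p) and its Young–Fenchel transform h*(t) = sup_{p∈(1,b)} (pt − h(p)). Then for every t ≥ eK, P(|η| > t) ≤ exp(−h*(ln(t/K))). -/

import Mathlib

open MeasureTheory Real Set

/-! Markov's inequality applied to `|η|^p` gives, for every admissible `p`,
`P(|η| > t) ≤ (K ψ(p) / t)^p = exp (-(p ln (t/K) - p ln ψ(p)))`; taking the infimum of the
right-hand side over `p` is the same as subtracting the supremum `h*(ln (t/K))` in the exponent. -/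

theorem measure_lt_abs_le_of_lintegral_rpow_le {Ω : Type*} [MeasurableSpace Ω] {μ : Measure Ω}
    {η : Ω → ℝ} (hη : AEMeasurable η μ) {p t M : ℝ} (hp : 0 < p) (ht : 0 < t) (hM : 0 ≤ M)
    (hmom : (∫⁻ ω, ENNReal.ofReal (|η ω| ^ p) ∂μ) ^ (1 / p) ≤ ENNReal.ofReal M) :
    μ {ω | t < |η ω|} ≤ ENNReal.ofReal ((M / t) ^ p) := by
  have htp : 0 < t ^ p := rpow_pos_of_pos ht p
  have hint : ∫⁻ ω, ENNReal.ofReal (|η ω| ^ p) ∂μ ≤ ENNReal.ofReal (M ^ p) := by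
    have := ENNReal.rpow_le_rpow hmom hp.le
    rwa [← ENNReal.rpow_mul, one_div_mul_cancel hp.ne', ENNReal.rpow_one,
      ENNReal.ofReal_rpow_of_nonneg hM hp.le] at this
  calc μ {ω | t < |η ω|}
      ≤ μ {ω | ENNReal.ofReal (t ^ p) ≤ ENNReal.ofReal (|η ω| ^ p)} :=
        measure_mono fun ω hω => ENNReal.ofReal_le_ofReal (rpow_le_rpow ht.le (le_of_lt hω) hp.le)
    _ ≤ (∫⁻ ω, ENNReal.ofReal (|η ω| ^ p) ∂μ) / ENNReal.ofReal (t ^ p) :=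
        meas_ge_le_lintegral_div (by fun_prop) (by simpa using htp) ENNReal.ofReal_ne_top
    _ ≤ ENNReal.ofReal (M ^ p) / ENNReal.ofReal (t ^ p) := by gcongr
    _ = ENNReal.ofReal ((M / t) ^ p) := by rw [← ENNReal.ofReal_div_of_pos htp, div_rpow hM ht.le]

theorem mul_div_rpow_eq_exp_neg {K c t : ℝ} (hK : 0 < K) (hc : 0 < c) (ht : 0 < t) (p : ℝ) :
    (K * c / t) ^ p = exp (-(p * log (t / K) - p * log c)) := by
  rw [rpow_def_of_pos (by positivity), log_div (by positivity) ht.ne', log_mul hK.ne' hc.ne',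
    log_div ht.ne' hK.ne']
  ring_nf

/-- Junk value: `sSup S = 0` when `S` is empty or not bounded above. -/
theorem le_exp_neg_sSup_of_forall_le {x : ℝ} {S : Set ℝ} (hx : x ≤ 1)
    (hS : ∀ r ∈ S, x ≤ exp (-r)) : x ≤ exp (-sSup S) := by
  rcases le_or_gt x 0 with hx0 | hx0
  · exact hx0.trans (exp_pos _).le
  rcases S.eq_empty_or_nonempty with rfl | hne
  · simpa using hx
  by_cases hbdd : BddAbove S
  · have hsup : sSup S ≤ -log x := csSup_le hne fun r hr => by
      rw [le_neg, log_le_iff_le_exp hx0]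
      exact hS r hr
    rw [← log_le_iff_le_exp hx0]
    linarith
  · simpa [Real.sSup_of_not_bddAbove hbdd] using hx

theorem gls_tail_estimate_general
    {Ω : Type*} [MeasurableSpace Ω] (μ : Measure Ω) [IsProbabilityMeasure μ]
    (η : Ω → ℝ) (hη : Measurable η) (b : ℝ)
    (ψ : ℝ → ℝ) (hψ : ∀ p ∈ Ioo (1 : ℝ) b, 0 < ψ p)
    (K : ℝ) (hK : 0 < K)
    (hmom : ∀ p ∈ Ioo (1 : ℝ) b,
      (∫⁻ ω, ENNReal.ofReal (|η ω| ^ p) ∂μ) ^ (1 / p) ≤ ENNReal.ofReal (K * ψ p)) :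
    ∀ t : ℝ, Real.exp 1 * K ≤ t →
      μ {ω | t < |η ω|} ≤ ENNReal.ofReal
        (Real.exp (-(sSup {r : ℝ | ∃ p ∈ Ioo (1 : ℝ) b,
          r = p * Real.log (t / K) - p * Real.log (ψ p)}))) := by
  intro t ht
  have ht0 : 0 < t := (by positivity : 0 < exp 1 * K).trans_le ht
  rw [← ENNReal.ofReal_toReal (measure_ne_top μ {ω | t < |η ω|})]
  refine ENNReal.ofReal_le_ofReal (le_exp_neg_sSup_of_forall_le ?_ ?_)
  · exact ENNReal.toReal_le_of_le_ofReal zero_le_one (by simpa using prob_le_one)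
  · rintro r ⟨p, hp, rfl⟩
    have hψp := hψ p hp
    rw [← mul_div_rpow_eq_exp_neg hK hψp ht0]
    exact ENNReal.toReal_le_of_le_ofReal (by positivity) <|
      measure_lt_abs_le_of_lintegral_rpow_le hη.aemeasurable (one_pos.trans hp.1) ht0
        (by positivity) (hmom p hp)

/-- Grand Lebesgue Space tail estimate: if `|η|_p ≤ K ψ(p)` for all `p ∈ (1,b)`
with `K > 0`, and `h(p) = p ln ψ(p)` with Young–Fenchel transform
`h*(t) = sup_{p ∈ (1,b)} (p t − h(p))`, then
`P(|η| > t) ≤ exp(−h*(ln(t/K)))` for all `t ≥ e K`. -/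
theorem gls_tail_estimate
    {Ω : Type*} [MeasurableSpace Ω] (μ : Measure Ω) [IsProbabilityMeasure μ]
    (η : Ω → ℝ) (hη : Measurable η) (b : ℝ) (hb : 1 < b)
    (ψ : ℝ → ℝ) (hψ : ∀ p ∈ Ioo (1 : ℝ) b, 0 < ψ p)
    (K : ℝ) (hK : 0 < K)
    (hmom : ∀ p ∈ Ioo (1 : ℝ) b,
      (∫⁻ ω, ENNReal.ofReal (|η ω| ^ p) ∂μ) ^ (1 / p) ≤ ENNReal.ofReal (K * ψ p)) :
    ∀ t : ℝ, Real.exp 1 * K ≤ t →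
      μ {ω | t < |η ω|} ≤ ENNReal.ofReal
        (Real.exp (-(sSup {r : ℝ | ∃ p ∈ Ioo (1 : ℝ) b,
          r = p * Real.log (t / K) - p * Real.log (ψ p)}))) :=
  gls_tail_estimate_general μ η hη b ψ hψ K hK hmom
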